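/- In dimension one, take B = 3/2 and D = {0,1}. The interval [0,2] satisfies (3/2)·[0,2] = [0,2] ∪ ([0,2] + 1), so K(B,D) = [0,2] and |K(B,D)| = 2; moreover the associated measure μ has D⁺(μ) = ∞. In particular |K(B,D)| ≠ (D⁺(μ))⁻¹, so the formula relating Lebesgue measure to upper Beurling density fails when card D > |det B|. -/
import Mathlib


open MeasureTheory Filter
open scoped ENNReal

/-- The upper Beurling density of a positive Borel measure on ℝ. -/
noncomputable def beurlingUpperOne (ν : Measure ℝ) : ℝ≥0∞ :=
  Filter.limsup (fun N : ℝ =>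
    ⨆ z : ℝ, ν (Set.Icc (z - N / 2) (z + N / 2)) / ENNReal.ofReal N) Filter.atTop

/-- The measure `μ = sup_k μ_k` associated with the dilation `3/2` and the digit set
`{0, 1}`, where `μ_k = Σ_{ℓ_0,…,ℓ_{k−1} ∈ {0,1}} δ_{ℓ_0 + (3/2)ℓ_1 + ⋯ + (3/2)^{k−1}ℓ_{k−1}}`. -/
noncomputable def muThreeHalves : Measure ℝ :=
  ⨆ k : ℕ, Measure.sum (fun ℓ : Fin k → ({0, 1} : Finset ℝ) =>
    Measure.dirac (∑ j : Fin k, (3 / 2 : ℝ) ^ (j : ℕ) * (ℓ j : ℝ)))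

lemma digit_mem (x : ({0, 1} : Finset ℝ)) : (x : ℝ) = 0 ∨ (x : ℝ) = 1 := by
  have h := x.2
  rw [Finset.mem_insert, Finset.mem_singleton] at h
  exact h

lemma digit_nonneg (x : ({0, 1} : Finset ℝ)) : (0 : ℝ) ≤ x := by
  rcases digit_mem x with h | h <;> rw [h] <;> norm_num

lemma digit_le_one (x : ({0, 1} : Finset ℝ)) : (x : ℝ) ≤ 1 := by
  rcases digit_mem x with h | h <;> rw [h] <;> norm_num

lemma mu_lb (k : ℕ) :
    (2 : ℝ≥0∞) ^ k ≤ muThreeHalves (Set.Icc 0 (2 * (3 / 2 : ℝ) ^ k)) := by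
  have hle : (Measure.sum (fun ℓ : Fin k → ({0, 1} : Finset ℝ) =>
      Measure.dirac (∑ j : Fin k, (3 / 2 : ℝ) ^ (j : ℕ) * (ℓ j : ℝ)))) ≤ muThreeHalves :=
    le_iSup (fun k : ℕ => Measure.sum (fun ℓ : Fin k → ({0, 1} : Finset ℝ) =>
      Measure.dirac (∑ j : Fin k, (3 / 2 : ℝ) ^ (j : ℕ) * (ℓ j : ℝ)))) k
  refine le_trans ?_ (hle _)
  rw [Measure.sum_apply _ measurableSet_Icc]
  have hpt : ∀ ℓ : Fin k → ({0, 1} : Finset ℝ),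
      (∑ j : Fin k, (3 / 2 : ℝ) ^ (j : ℕ) * (ℓ j : ℝ)) ∈ Set.Icc (0 : ℝ) (2 * (3 / 2 : ℝ) ^ k) := by
    intro ℓ
    constructor
    · exact Finset.sum_nonneg fun j _ => mul_nonneg (by positivity) (digit_nonneg _)
    · have h1 : (∑ j : Fin k, (3 / 2 : ℝ) ^ (j : ℕ) * (ℓ j : ℝ)) ≤
          ∑ j : Fin k, (3 / 2 : ℝ) ^ (j : ℕ) := by
        refine Finset.sum_le_sum fun j _ => ?_
        calc (3 / 2 : ℝ) ^ (j : ℕ) * (ℓ j : ℝ) ≤ (3 / 2 : ℝ) ^ (j : ℕ) * 1 :=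
              mul_le_mul_of_nonneg_left (digit_le_one _) (by positivity)
          _ = (3 / 2 : ℝ) ^ (j : ℕ) := mul_one _
      have h2 : (∑ j : Fin k, (3 / 2 : ℝ) ^ (j : ℕ)) = 2 * (3 / 2 : ℝ) ^ k - 2 := by
        rw [Fin.sum_univ_eq_sum_range (fun j => (3 / 2 : ℝ) ^ j)]
        rw [geom_sum_eq (by norm_num : (3 / 2 : ℝ) ≠ 1)]
        ring
      linarith
  have : ∀ ℓ : Fin k → ({0, 1} : Finset ℝ),
      Measure.dirac (∑ j : Fin k, (3 / 2 : ℝ) ^ (j : ℕ) * (ℓ j : ℝ))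
        (Set.Icc (0 : ℝ) (2 * (3 / 2 : ℝ) ^ k)) = 1 := fun ℓ =>
    Measure.dirac_apply_of_mem (hpt ℓ)
  rw [tsum_congr this, tsum_fintype, Finset.sum_const, Finset.card_univ]
  have hcard : Fintype.card (Fin k → ({0, 1} : Finset ℝ)) = 2 ^ k := by
    rw [Fintype.card_fun, Fintype.card_coe, Fintype.card_fin,
      Finset.card_insert_of_notMem (by norm_num), Finset.card_singleton]
  rw [hcard]
  simp [pow_succ]

lemma beurling_top : beurlingUpperOne muThreeHalves = ⊤ := by
  refine top_le_iff.mp ?_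
  refine ENNReal.le_of_forall_nnreal_lt fun c _ => ?_
  refine Filter.le_limsup_of_frequently_le ?_ ⟨⊤, Filter.eventually_map.mpr
    (Filter.Eventually.of_forall fun _ => le_top)⟩
  rw [Filter.frequently_atTop]
  intro b
  -- choose k large
  have h32 : Filter.Tendsto (fun k : ℕ => (3 / 2 : ℝ) ^ k) atTop atTop :=
    tendsto_pow_atTop_atTop_of_one_lt (by norm_num)
  have h43 : Filter.Tendsto (fun k : ℕ => (4 / 3 : ℝ) ^ k) atTop atTop :=
    tendsto_pow_atTop_atTop_of_one_lt (by norm_num)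
  have h1 : ∀ᶠ k : ℕ in atTop, b ≤ 2 * (3 / 2 : ℝ) ^ k := by
    filter_upwards [h32.eventually_ge_atTop b] with k hk
    nlinarith [pow_pos (by norm_num : (0:ℝ) < 3/2) k]
  have h2 : ∀ᶠ k : ℕ in atTop, (c : ℝ) ≤ (4 / 3 : ℝ) ^ k / 2 := by
    filter_upwards [h43.eventually_ge_atTop (2 * c)] with k hk
    linarith
  obtain ⟨k, hk1, hk2⟩ := (h1.and h2).exists
  set N : ℝ := 2 * (3 / 2 : ℝ) ^ k with hN
  have hNpos : 0 < N := by positivity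
  refine ⟨N, hk1, ?_⟩
  have hmono : muThreeHalves (Set.Icc 0 N) / ENNReal.ofReal N ≤
      ⨆ z : ℝ, muThreeHalves (Set.Icc (z - N / 2) (z + N / 2)) / ENNReal.ofReal N := by
    have := le_iSup (fun z : ℝ =>
      muThreeHalves (Set.Icc (z - N / 2) (z + N / 2)) / ENNReal.ofReal N) (N / 2)
    simpa using this
  refine le_trans ?_ hmono
  have hlb : (2 : ℝ≥0∞) ^ k / ENNReal.ofReal N ≤ muThreeHalves (Set.Icc 0 N) / ENNReal.ofReal N :=
    ENNReal.div_le_div_right (mu_lb k) _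
  refine le_trans ?_ hlb
  have heq : (2 : ℝ≥0∞) ^ k / ENNReal.ofReal N = ENNReal.ofReal ((4 / 3 : ℝ) ^ k / 2) := by
    have h2k : (2 : ℝ≥0∞) ^ k = ENNReal.ofReal ((2 : ℝ) ^ k) := by
      rw [ENNReal.ofReal_pow (by norm_num)]
      norm_num
    rw [h2k, ← ENNReal.ofReal_div_of_pos hNpos]
    congr 1
    rw [div_eq_div_iff hNpos.ne' (by norm_num : (2:ℝ) ≠ 0), hN]
    rw [show ((4:ℝ)/3)^k * (2 * (3/2 : ℝ)^k) = ((4/3 : ℝ)*(3/2))^k * 2 by rw [mul_pow]; ring]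
    norm_num
  rw [heq]
  calc (c : ℝ≥0∞) = ENNReal.ofReal (c : ℝ) := ENNReal.ofReal_coe_nnreal.symm
    _ ≤ ENNReal.ofReal ((4 / 3 : ℝ) ^ k / 2) := ENNReal.ofReal_le_ofReal hk2

lemma K_eq_Icc (K : Set ℝ) (hKc : IsCompact K) (hKne : K.Nonempty)
    (hK : (fun x => (3 / 2 : ℝ) * x) '' K = K ∪ (fun x => x + 1) '' K) :
    K = Set.Icc (0 : ℝ) 2 := by
  obtain ⟨b, hb⟩ := hKc.exists_isGreatest hKne
  obtain ⟨a, ha⟩ := hKc.exists_isLeast hKne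
  -- b = 2
  have hb2 : b = 2 := by
    have hbge : 2 ≤ b := by
      have : b + 1 ∈ (fun x => (3 / 2 : ℝ) * x) '' K := by
        rw [hK]; exact Or.inr ⟨b, hb.1, rfl⟩
      obtain ⟨y, hyK, hy⟩ := this
      have := hb.2 hyK
      simp only at hy
      linarith
    have : (3 / 2 : ℝ) * b ∈ K ∪ (fun x => x + 1) '' K := by
      rw [← hK]; exact ⟨b, hb.1, rfl⟩
    rcases this with h | ⟨y, hyK, hy⟩
    · have := hb.2 h; linarith
    · have := hb.2 hyK; simp only at hy; linarith
  -- a = 0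
  have ha0 : a = 0 := by
    have hale : a ≤ 0 := by
      have : a ∈ (fun x => (3 / 2 : ℝ) * x) '' K := by
        rw [hK]; exact Or.inl ha.1
      obtain ⟨y, hyK, hy⟩ := this
      have := ha.2 hyK
      simp only at hy
      linarith
    have : (3 / 2 : ℝ) * a ∈ K ∪ (fun x => x + 1) '' K := by
      rw [← hK]; exact ⟨a, ha.1, rfl⟩
    rcases this with h | ⟨y, hyK, hy⟩
    · have := ha.2 h; linarith
    · have := ha.2 hyK; simp only at hy; linarith
  have hsub : K ⊆ Set.Icc (0 : ℝ) 2 := fun x hx =>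
    ⟨ha0 ▸ ha.2 hx, hb2 ▸ hb.2 hx⟩
  -- reverse inclusion by contraction of infDist
  obtain ⟨x0, hx0, hmax⟩ := isCompact_Icc.exists_isMaxOn (⟨0, by norm_num⟩ :
      (Set.Icc (0 : ℝ) 2).Nonempty)
    ((Metric.continuous_infDist_pt K).continuousOn)
  set d := Metric.infDist x0 K with hd
  have hdmax : ∀ x ∈ Set.Icc (0 : ℝ) 2, Metric.infDist x K ≤ d := fun x hx => hmax hx
  have hd0 : d ≤ 0 := by
    have hkey : d ≤ 2 / 3 * d := by
      set z := (3 / 2 : ℝ) * x0 with hz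
      have hx00 : 0 ≤ x0 := hx0.1
      have hx02 : x0 ≤ 2 := hx0.2
      by_cases hcase : z ≤ 2
      · -- z ∈ [0,2]
        obtain ⟨y, hyK, hy⟩ := hKc.exists_infDist_eq_dist hKne z
        have hyd : dist z y ≤ d := by
          rw [← hy]; exact hdmax z ⟨by positivity, hcase⟩
        have hyim : y ∈ (fun x => (3 / 2 : ℝ) * x) '' K := by
          rw [hK]; exact Or.inl hyK
        obtain ⟨w, hwK, hw⟩ := hyim
        have : Metric.infDist x0 K ≤ dist x0 w := Metric.infDist_le_dist_of_mem hwK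
        have hdist : dist x0 w = 2 / 3 * dist z y := by
          simp only at hw
          rw [Real.dist_eq, Real.dist_eq, ← hw, hz]
          rw [show (3/2:ℝ) * x0 - 3/2 * w = (3/2) * (x0 - w) by ring, abs_mul]
          rw [abs_of_pos (by norm_num : (0:ℝ) < 3/2)]
          ring
        rw [hd]
        calc Metric.infDist x0 K ≤ dist x0 w := this
          _ = 2 / 3 * dist z y := hdist
          _ ≤ 2 / 3 * d := by linarith
      · -- z - 1 ∈ [0,2]
        push_neg at hcase
        obtain ⟨y, hyK, hy⟩ := hKc.exists_infDist_eq_dist hKne (z - 1)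
        have hyd : dist (z - 1) y ≤ d := by
          rw [← hy]
          exact hdmax (z - 1) ⟨by linarith, by rw [hz]; linarith⟩
        have hyim : y + 1 ∈ (fun x => (3 / 2 : ℝ) * x) '' K := by
          rw [hK]; exact Or.inr ⟨y, hyK, rfl⟩
        obtain ⟨w, hwK, hw⟩ := hyim
        have : Metric.infDist x0 K ≤ dist x0 w := Metric.infDist_le_dist_of_mem hwK
        have hdist : dist x0 w = 2 / 3 * dist (z - 1) y := by
          simp only at hw
          rw [Real.dist_eq, Real.dist_eq]
          have : x0 - w = 2 / 3 * ((z - 1) - y) := by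
            rw [hz]
            have : (3:ℝ)/2 * w = y + 1 := hw
            nlinarith [this]
          rw [this, abs_mul, abs_of_pos (by norm_num : (0:ℝ) < 2/3)]
        rw [hd]
        calc Metric.infDist x0 K ≤ dist x0 w := this
          _ = 2 / 3 * dist (z - 1) y := hdist
          _ ≤ 2 / 3 * d := by linarith
    linarith
  have hsup : Set.Icc (0 : ℝ) 2 ⊆ K := by
    intro x hx
    have h1 : Metric.infDist x K ≤ 0 := le_trans (hdmax x hx) hd0
    have h2 : 0 ≤ Metric.infDist x K := Metric.infDist_nonneg
    exact (hKc.isClosed.mem_iff_infDist_zero hKne).mpr (le_antisymm h1 h2)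
  exact Set.Subset.antisymm hsub hsup

/-- **Example.** For the dilation `B = 3/2` and digit set `D = {0,1}` (so
`card D > |det B|`), the self-affine set is `K = [0,2]`, of Lebesgue measure `2`, while the
associated measure `μ` has `D⁺(μ) = ∞`; in particular `|K| ≠ (D⁺(μ))⁻¹`, so the formula of
the Lebesgue-measure theorem fails when `card D > |det B|`. -/
theorem example_three_halves (K : Set ℝ) (hKc : IsCompact K) (hKne : K.Nonempty)
    (hK : (fun x => (3 / 2 : ℝ) * x) '' K = K ∪ (fun x => x + 1) '' K) :
    K = Set.Icc (0 : ℝ) 2 ∧ volume K = 2 ∧ beurlingUpperOne muThreeHalves = ⊤ ∧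
      volume K ≠ (beurlingUpperOne muThreeHalves)⁻¹ := by
  have hKeq := K_eq_Icc K hKc hKne hK
  have hvol : volume K = 2 := by
    rw [hKeq, Real.volume_Icc]
    norm_num
  refine ⟨hKeq, hvol, beurling_top, ?_⟩
  rw [hvol, beurling_top]
  simp
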